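/- arXiv:1006.0149 — 2 statements merged into one kernel-verified Lean document; each statement's English description precedes it below -/
import Mathlib

section
/- Let n ≥ 1, T > 0, and let q : ℝⁿ → ℝ be bounded and continuous. Let v, F : ℝ × ℝⁿ → ℂ be twice continuously differentiable, and suppose there is a compact set K ⊂ ℝⁿ such that v(t,·) and F(t,·) vanish outside K for every t ∈ [0,T]. If i ∂ₜv + Δv + q v = F on [0,T] × ℝⁿ, v(0,·) = 0 and F(0,·) = 0, then there is a constant C, depending only on T and on the supremum of |q|, such that for every t ∈ [0,T] and every η > 0, ‖∇v(t,·)‖_{L²} ≤ C ( η ∫₀ᵀ ‖∂ₜF(s,·)‖_{L²} ds + η⁻¹ ∫₀ᵀ ‖F(s,·)‖_{L²} ds ). -/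
/-!
Energy method. If `i ∂ₜu + A + q u = f` with `q` real, `⟨A(t), u(t)⟩` real and `u(0) = 0`, then
`d/dt ‖u‖² = 2 Re ⟨∂ₜu, u⟩ = 2 Im ⟨f, u⟩ ≤ 2 ‖f‖ ‖u‖`, hence `‖u(t)‖ ≤ ∫₀ᵗ ‖f‖`. This applies to
`v` (with `A = Δv`) and to `∂ₜv` (with `A = ∂ₜΔv` and source `∂ₜF`; `∂ₜv(0) = 0` because
`v(0) = F(0) = 0`), and in the same way `‖F(t)‖ ≤ ∫₀ᵗ ‖∂ₜF‖`. Since `v` is only `C²`, the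
reality of `⟨∂ₜΔv, ∂ₜv⟩ = -‖∇∂ₜv‖²` comes from differentiating
`⟨Δv(τ), g⟩ = -∑ⱼ ⟨∂ⱼv(τ), ∂ⱼg⟩` in `τ`. Pairing the equation with `v` then gives
`‖∇v‖² = -Re ⟨Δv, v⟩ ≤ (‖F‖ + ‖∂ₜv‖ + M ‖v‖) ‖v‖ ≤ (2 + M T) A B` with `A = ∫₀ᵀ ‖∂ₜF‖` and
`B = ∫₀ᵀ ‖F‖ ≤ T A`, and `√(A B) ≤ (η A + η⁻¹ B) / 2`.
-/

open MeasureTheory Complex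

noncomputable section

/-- Partial derivative in the `j`-th coordinate direction of a complex-valued
function on `ℝⁿ`. -/
def pd {n : ℕ} (j : Fin n) (f : EuclideanSpace ℝ (Fin n) → ℂ)
    (x : EuclideanSpace ℝ (Fin n)) : ℂ :=
  fderiv ℝ f x (EuclideanSpace.single j 1)

/-- Euclidean Laplacian `Σⱼ ∂²/∂xⱼ²` of a complex-valued function on `ℝⁿ`. -/
def lapC {n : ℕ} (f : EuclideanSpace ℝ (Fin n) → ℂ)
    (x : EuclideanSpace ℝ (Fin n)) : ℂ :=
  ∑ j, pd j (pd j f) x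

/-- `L²`-norm of a complex-valued function on `ℝⁿ`. -/
def L2norm {n : ℕ} (f : EuclideanSpace ℝ (Fin n) → ℂ) : ℝ :=
  (∫ x, ‖f x‖ ^ 2) ^ (1/2 : ℝ)

/-- `L²`-norm of the (spatial) gradient. -/
def gradL2norm {n : ℕ} (f : EuclideanSpace ℝ (Fin n) → ℂ) : ℝ :=
  (∫ x, ∑ j, ‖pd j f x‖ ^ 2) ^ (1/2 : ℝ)

open Set Filter Topology ComplexConjugate

section TimeDerivative

variable {E G : Type*} [NormedAddCommGroup E] [NormedSpace ℝ E]
  [NormedAddCommGroup G] [NormedSpace ℝ G]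

def timeDeriv (v : ℝ × E → G) : ℝ × E → G := fun p => fderiv ℝ v p (1, 0)

lemma hasDerivAt_timeDeriv {v : ℝ × E → G} {t : ℝ} {x : E}
    (hv : DifferentiableAt ℝ v (t, x)) :
    HasDerivAt (fun s => v (s, x)) (timeDeriv v (t, x)) t :=
  hv.hasFDerivAt.comp_hasDerivAt t ((hasDerivAt_id t).prodMk (hasDerivAt_const t x))

lemma deriv_eq_timeDeriv {v : ℝ × E → G} (hv : Differentiable ℝ v) (t : ℝ) (x : E) :
    deriv (fun s => v (s, x)) t = timeDeriv v (t, x) :=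
  (hasDerivAt_timeDeriv (hv _)).deriv

lemma ContDiff.timeDeriv {v : ℝ × E → G} {m : ℕ} (hv : ContDiff ℝ (m + 1) v) :
    ContDiff ℝ m (timeDeriv v) :=
  (hv.fderiv_right le_rfl).clm_apply contDiff_const

lemma fderiv_slice_apply {v : ℝ × E → G} {t : ℝ} {x : E} (hv : DifferentiableAt ℝ v (t, x))
    (a : E) : fderiv ℝ (fun y => v (t, y)) x a = fderiv ℝ v (t, x) (0, a) := by
  have h : HasFDerivAt (fun y => v (t, y)) _ x :=
    hv.hasFDerivAt.comp x ((hasFDerivAt_const t x).prodMk (hasFDerivAt_id x))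
  simp [h.fderiv]

lemma hasDerivAt_fderiv_slice_apply {v : ℝ × E → G} (hv : ContDiff ℝ 2 v) (t : ℝ) (x a : E) :
    HasDerivAt (fun s => fderiv ℝ (fun y => v (s, y)) x a)
      (fderiv ℝ (fun y => timeDeriv v (t, y)) x a) t := by
  have hv1 : ContDiff ℝ 1 (fderiv ℝ v) := hv.fderiv_right le_rfl
  have hva : ContDiff ℝ 1 (fun p => fderiv ℝ v p (0, a)) := hv1.clm_apply contDiff_const
  have hd := hasDerivAt_timeDeriv ((hva.differentiable one_ne_zero) (t, x))
  rw [fderiv_slice_apply ((hv.timeDeriv (m := 1)).differentiable one_ne_zero _)]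
  simp only [fderiv_slice_apply ((hv.differentiable two_ne_zero) _)]
  convert hd using 1
  unfold timeDeriv
  rw [fderiv_clm_apply (hv1.differentiable one_ne_zero _) (differentiableAt_const _),
    fderiv_clm_apply (hv1.differentiable one_ne_zero _) (differentiableAt_const _)]
  simpa using ((hv.contDiffAt).isSymmSndFDerivAt (by simp)) (0, a) (1, 0)

lemma continuous_fderiv_slice_apply {v : ℝ × E → G} (hv : ContDiff ℝ 1 v) (a : E) :
    Continuous fun p : ℝ × E => fderiv ℝ (fun y => v (p.1, y)) p.2 a := by
  simp only [fderiv_slice_apply (hv.differentiable one_ne_zero _)]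
  exact (hv.continuous_fderiv one_ne_zero).clm_apply continuous_const

lemma timeDeriv_eq_zero_of_forall_eq_zero {v : ℝ × E → G} (hv : Differentiable ℝ v) {a b : ℝ}
    (hab : a < b) {K : Set E} (h0 : ∀ t ∈ Icc a b, ∀ x ∉ K, v (t, x) = 0) :
    ∀ t ∈ Icc a b, ∀ x ∉ K, timeDeriv v (t, x) = 0 := fun t ht x hx =>
  (uniqueDiffOn_Icc hab t ht).eq_deriv _ (hasDerivAt_timeDeriv (hv _)).hasDerivWithinAt
    ((hasDerivWithinAt_const t _ 0).congr (fun s hs => h0 s hs x hx) (h0 t ht x hx))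

end TimeDerivative

section ParametricIntegral

variable {E G : Type*} [TopologicalSpace E] [SecondCountableTopology E]
  [MeasurableSpace E] [OpensMeasurableSpace E] {μ : Measure E} [IsLocallyFiniteMeasure μ]
  [NormedAddCommGroup G] [NormedSpace ℝ G]

lemma continuousOn_integral_of_forall_eq_zero {f : ℝ × E → G} (hf : Continuous f) {K : Set E}
    (hK : IsCompact K) {I : Set ℝ} (hI : ∀ t ∈ I, ∀ x ∉ K, f (t, x) = 0) :
    ContinuousOn (fun t => ∫ x, f (t, x) ∂μ) I :=
  (continuous_parametric_integral_of_continuous (μ := μ) (f := fun t x => f (t, x)) hf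
    hK).continuousOn.congr fun t ht =>
      (setIntegral_eq_integral_of_forall_compl_eq_zero (hI t ht)).symm

lemma hasDerivAt_integral_of_forall_eq_zero [T2Space E] {f f' : ℝ × E → G} {t : ℝ} {K : Set E}
    (hK : IsCompact K) (hf : ∀ s, Continuous fun x => f (s, x)) (hf' : Continuous f')
    (hf0 : ∀ x ∉ K, f (t, x) = 0) (hf'0 : ∀ᶠ s in 𝓝 t, ∀ x ∉ K, f' (s, x) = 0)
    (hd : ∀ᶠ s in 𝓝 t, ∀ x, HasDerivAt (fun s => f (s, x)) (f' (s, x)) s) :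
    HasDerivAt (fun s => ∫ x, f (s, x) ∂μ) (∫ x, f' (t, x) ∂μ) t := by
  obtain ⟨ε, hε, hball⟩ := Metric.eventually_nhds_iff_ball.1 (hf'0.and hd)
  obtain ⟨C, hC⟩ := ((isCompact_closedBall t (ε / 2)).prod hK).exists_bound_of_continuousOn
    hf'.continuousOn
  have hsub : Metric.ball t (ε / 2) ⊆ Metric.ball t ε := Metric.ball_subset_ball (by linarith)
  refine (hasDerivAt_integral_of_dominated_loc_of_deriv_le (bound := K.indicator fun _ => C)
    (Metric.ball_mem_nhds t (half_pos hε)) (.of_forall fun s => (hf s).aestronglyMeasurable)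
    ((hf t).integrable_of_hasCompactSupport (HasCompactSupport.intro hK hf0))
    (hf'.comp (continuous_const.prodMk continuous_id)).aestronglyMeasurable
    (.of_forall fun x s hs => ?_) ?_ (.of_forall fun x s hs => (hball s (hsub hs)).2 x)).2
  · by_cases hx : x ∈ K
    · simpa [hx] using hC (s, x) ⟨Metric.ball_subset_closedBall hs, hx⟩
    · simp [hx, (hball s (hsub hs)).1 x hx]
  · exact (integrableOn_const hK.measure_ne_top).integrable_indicator hK.measurableSet

end ParametricIntegral

lemma sqrt_le_integral_of_hasDerivAt_le {a b : ℝ} {G G' h : ℝ → ℝ}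
    (hG : ContinuousOn G (Icc a b)) (hG0 : ∀ t ∈ Icc a b, 0 ≤ G t) (hGa : G a = 0)
    (hG' : ∀ t ∈ Ioo a b, HasDerivAt G (G' t) t)
    (hh : ContinuousOn h (Icc a b)) (hh0 : ∀ t ∈ Icc a b, 0 ≤ h t)
    (hle : ∀ t ∈ Ioo a b, G' t ≤ 2 * h t * √(G t)) :
    ∀ t ∈ Icc a b, √(G t) ≤ ∫ s in a..t, h s := by
  intro t ht
  refine le_of_forall_pos_le_add fun ε hε => ?_
  have hpos : ∀ s ∈ Icc a b, 0 < G s + ε ^ 2 := fun s hs => by nlinarith [hG0 s hs]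
  have hint : ∀ s ∈ Icc a b, IntervalIntegrable h volume a s := fun s hs =>
    (hh.mono (uIcc_subset_Icc ⟨le_rfl, hs.1.trans hs.2⟩ hs)).intervalIntegrable
  -- `√(G + ε²)` rather than `√G`, which need not be differentiable where `G` vanishes
  set φ : ℝ → ℝ := fun s => √(G s + ε ^ 2) - ∫ σ in a..s, h σ
  have hφ' : ∀ s ∈ Ioo a b, HasDerivAt φ (G' s / (2 * √(G s + ε ^ 2)) - h s) s := fun s hs =>
    (((hG' s hs).add_const (ε ^ 2)).sqrt (hpos s (Ioo_subset_Icc_self hs)).ne').sub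
      (intervalIntegral.integral_hasDerivAt_right (hint s (Ioo_subset_Icc_self hs))
        ((hh.mono Ioo_subset_Icc_self).stronglyMeasurableAtFilter isOpen_Ioo s hs)
        (hh.continuousAt (Icc_mem_nhds hs.1 hs.2)))
  have hanti : AntitoneOn φ (Icc a b) := by
    refine antitoneOn_of_deriv_nonpos (convex_Icc a b) ?_ ?_ ?_
    · exact ((hG.add continuousOn_const).sqrt).sub
        (intervalIntegral.continuousOn_primitive_interval' (hint b ⟨ht.1.trans ht.2, le_rfl⟩)
          left_mem_uIcc |>.mono (by rw [uIcc_of_le (ht.1.trans ht.2)]))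
    · rw [interior_Icc]
      exact fun s hs => (hφ' s hs).differentiableAt.differentiableWithinAt
    · rw [interior_Icc]
      intro s hs
      have hs' := Ioo_subset_Icc_self hs
      have hsqrt : √(G s) ≤ √(G s + ε ^ 2) := Real.sqrt_le_sqrt (by nlinarith)
      rw [(hφ' s hs).deriv, sub_nonpos, div_le_iff₀
        (mul_pos two_pos (Real.sqrt_pos.2 (hpos s hs')))]
      nlinarith [hle s hs, hh0 s hs']
  have hφt := hanti ⟨le_rfl, ht.1.trans ht.2⟩ ht ht.1
  simp only [φ, hGa, zero_add, Real.sqrt_sq hε.le, intervalIntegral.integral_same, sub_zero] at hφt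
  have : √(G t) ≤ √(G t + ε ^ 2) := Real.sqrt_le_sqrt (by nlinarith)
  linarith

lemma integral_le_integral_of_mem_Icc {a b t : ℝ} {h : ℝ → ℝ} (ht : t ∈ Icc a b)
    (hh : ContinuousOn h (Icc a b)) (hh0 : ∀ s ∈ Icc a b, 0 ≤ h s) :
    ∫ s in a..t, h s ≤ ∫ s in a..b, h s :=
  intervalIntegral.integral_mono_interval le_rfl ht.1 ht.2
    ((ae_restrict_iff' measurableSet_Ioc).2 (.of_forall fun s hs => hh0 s (Ioc_subset_Icc_self hs)))
    (hh.mono (uIcc_of_le (ht.1.trans ht.2)).subset).intervalIntegrable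

lemma sqrt_mul_le_add_div_two {A B η : ℝ} (hA : 0 ≤ A) (hB : 0 ≤ B) (hη : 0 < η) :
    √(A * B) ≤ (η * A + η⁻¹ * B) / 2 := by
  have hAB : A * B = (η * A) * (η⁻¹ * B) := by field_simp
  rw [Real.sqrt_le_left (by positivity), hAB]
  nlinarith [sq_nonneg (η * A - η⁻¹ * B)]

section Euclidean

variable {n : ℕ}

local notation "Ω" => EuclideanSpace ℝ (Fin n)

lemma L2norm_eq_sqrt (f : Ω → ℂ) : L2norm f = √(∫ x, ‖f x‖ ^ 2) :=
  (Real.sqrt_eq_rpow _).symm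

lemma L2norm_nonneg (f : Ω → ℂ) : 0 ≤ L2norm f :=
  (L2norm_eq_sqrt f).symm ▸ Real.sqrt_nonneg _

lemma gradL2norm_nonneg (f : Ω → ℂ) : 0 ≤ gradL2norm f :=
  Real.rpow_nonneg (integral_nonneg fun _ => by positivity) _

lemma L2norm_sq (f : Ω → ℂ) : L2norm f ^ 2 = ∫ x, ‖f x‖ ^ 2 := by
  rw [L2norm_eq_sqrt, Real.sq_sqrt (integral_nonneg fun _ => by positivity)]

lemma integral_ofReal_mul_mul_conj_self (q : Ω → ℝ) (f : Ω → ℂ) :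
    ∫ x, (q x : ℂ) * f x * conj (f x) = ((∫ x, q x * ‖f x‖ ^ 2 : ℝ) : ℂ) := by
  rw [← integral_complex_ofReal]
  congr 1 with x
  rw [mul_assoc, Complex.mul_conj']
  push_cast; ring

lemma integral_mul_conj_self (f : Ω → ℂ) :
    ∫ x, f x * conj (f x) = (↑(L2norm f ^ 2) : ℂ) := by
  simpa [L2norm_sq] using integral_ofReal_mul_mul_conj_self (fun _ => 1) f

lemma norm_integral_mul_conj_le {f g : Ω → ℂ} (hf : Continuous f) (hg : Continuous g)
    (hfs : HasCompactSupport f) (hgs : HasCompactSupport g) :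
    ‖∫ x, f x * conj (g x)‖ ≤ L2norm f * L2norm g := by
  have holder := integral_mul_le_Lp_mul_Lq_of_nonneg (μ := volume) Real.HolderConjugate.two_two
    (.of_forall fun x => norm_nonneg (f x)) (.of_forall fun x => norm_nonneg (g x))
    (by simpa using hf.norm.memLp_of_hasCompactSupport (p := 2) hfs.norm)
    (by simpa using hg.norm.memLp_of_hasCompactSupport (p := 2) hgs.norm)
  simp only [Real.rpow_two] at holder
  calc ‖∫ x, f x * conj (g x)‖ ≤ ∫ x, ‖f x‖ * ‖g x‖ :=
        (norm_integral_le_integral_norm _).trans_eq (by simp)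
    _ ≤ L2norm f * L2norm g := holder

lemma integrable_mul_conj {f g : Ω → ℂ} (hf : Continuous f) (hg : Continuous g)
    (hgs : HasCompactSupport g) : Integrable fun x => f x * conj (g x) :=
  (hf.mul (continuous_conj.comp hg)).integrable_of_hasCompactSupport
    (hgs.comp_left (map_zero _)).mul_left

lemma ContDiff.pd {m : ℕ} (j : Fin n) {f : Ω → ℂ} (hf : ContDiff ℝ (m + 1) f) :
    ContDiff ℝ m (pd j f) :=
  (hf.fderiv_right le_rfl).clm_apply contDiff_const

lemma HasCompactSupport.pd (j : Fin n) {f : Ω → ℂ} (hf : HasCompactSupport f) :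
    HasCompactSupport (pd j f) :=
  hf.fderiv_apply (𝕜 := ℝ) _

lemma pd_conj (j : Fin n) {f : Ω → ℂ} (x : Ω) :
    pd j (fun y => conj (f y)) x = conj (pd j f x) := by
  simp only [pd, ← Complex.star_def, fderiv_star]
  rfl

lemma continuous_lapC {f : Ω → ℂ} (hf : ContDiff ℝ 2 f) : Continuous (lapC f) :=
  continuous_finsetSum _ fun j _ => ((hf.pd (m := 1) j).pd (m := 0) j).continuous

lemma integral_lapC_mul_conj {f g : Ω → ℂ} (hf : ContDiff ℝ 2 f) (hg : ContDiff ℝ 1 g)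
    (hgs : HasCompactSupport g) :
    ∫ x, lapC f x * conj (g x) = -∑ j, ∫ x, pd j f x * conj (pd j g x) := by
  have hpd : ∀ j, ContDiff ℝ 1 (pd j f) := fun j => hf.pd (m := 1) j
  have hgpd : ∀ j, Continuous (pd j g) := fun j => (hg.pd (m := 0) j).continuous
  have by_parts : ∀ j, ∫ x, pd j (pd j f) x * conj (g x) = -∫ x, pd j f x * conj (pd j g x) := by
    intro j
    have h : ∫ x, conj (g x) * pd j (pd j f) x = -∫ x, pd j (fun y => conj (g y)) x * pd j f x :=
      integral_mul_fderiv_eq_neg_fderiv_mul_of_integrable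
        ((integrable_mul_conj (hpd j).continuous (hgpd j) (hgs.pd j)).congr
          (.of_forall fun x => (mul_comm _ _).trans (congrArg (· * _) (pd_conj j x).symm)))
        ((integrable_mul_conj ((hpd j).pd (m := 0) j).continuous hg.continuous hgs).congr
          (.of_forall fun x => mul_comm _ _))
        ((integrable_mul_conj (hpd j).continuous hg.continuous hgs).congr
          (.of_forall fun x => mul_comm _ _))
        (fun x _ => (hg.differentiable one_ne_zero x).star)
        (fun x _ => (hpd j).differentiable one_ne_zero x)
    simpa only [pd_conj, mul_comm] using h
  rw [← Finset.sum_neg_distrib, ← Finset.sum_congr rfl fun j _ => by_parts j,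
    ← integral_finsetSum]
  · simp only [lapC, Finset.sum_mul]
  · exact fun j _ => integrable_mul_conj ((hpd j).pd (m := 0) j).continuous hg.continuous hgs

lemma gradL2norm_sq {f : Ω → ℂ} (hf : ContDiff ℝ 1 f) (hfs : HasCompactSupport f) :
    gradL2norm f ^ 2 = ∑ j, L2norm (pd j f) ^ 2 := by
  rw [gradL2norm, ← Real.sqrt_eq_rpow, Real.sq_sqrt (integral_nonneg fun _ => by positivity),
    integral_finsetSum]
  · simp only [L2norm_sq]
  · intro j _
    have hs : HasCompactSupport fun x => ‖pd j f x‖ ^ 2 :=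
      (hfs.pd j).comp_left (g := fun z : ℂ => ‖z‖ ^ 2) (by simp)
    exact ((hf.pd (m := 0) j).continuous.norm.pow 2).integrable_of_hasCompactSupport hs

lemma sum_integral_pd_mul_conj_self {f : Ω → ℂ} (hf : ContDiff ℝ 1 f) (hfs : HasCompactSupport f) :
    ∑ j, ∫ x, pd j f x * conj (pd j f x) = (↑(gradL2norm f ^ 2) : ℂ) := by
  simp [integral_mul_conj_self, gradL2norm_sq hf hfs]

lemma integral_lapC_mul_conj_self {f : Ω → ℂ} (hf : ContDiff ℝ 2 f) (hfs : HasCompactSupport f) :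
    ∫ x, lapC f x * conj (f x) = -(↑(gradL2norm f ^ 2) : ℂ) := by
  rw [integral_lapC_mul_conj hf (hf.of_le one_le_two) hfs,
    sum_integral_pd_mul_conj_self (hf.of_le one_le_two) hfs]

lemma continuousOn_L2norm {K : Set Ω} (hK : IsCompact K) {u : ℝ × Ω → ℂ} (hu : Continuous u)
    {I : Set ℝ} (hsupp : ∀ t ∈ I, ∀ x ∉ K, u (t, x) = 0) :
    ContinuousOn (fun t => L2norm fun x => u (t, x)) I := by
  simp only [L2norm_eq_sqrt]
  exact (continuousOn_integral_of_forall_eq_zero (f := fun p => ‖u p‖ ^ 2) (by fun_prop) hK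
    fun t ht x hx => by simp [hsupp t ht x hx]).sqrt

lemma L2norm_le_integral_of_re_integral_le {a b : ℝ} {K : Set Ω} (hK : IsCompact K)
    {u u' : ℝ × Ω → ℂ} (hu : Continuous u) (hu' : Continuous u')
    (hsupp : ∀ t ∈ Icc a b, ∀ x ∉ K, u (t, x) = 0) (hua : ∀ x, u (a, x) = 0)
    (hderiv : ∀ t ∈ Ioo a b, ∀ x, HasDerivAt (fun s => u (s, x)) (u' (t, x)) t)
    {h : ℝ → ℝ} (hh : ContinuousOn h (Icc a b)) (hh0 : ∀ t ∈ Icc a b, 0 ≤ h t)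
    (hle : ∀ t ∈ Ioo a b,
      (∫ x, u' (t, x) * conj (u (t, x))).re ≤ h t * L2norm fun x => u (t, x)) :
    ∀ t ∈ Icc a b, L2norm (fun x => u (t, x)) ≤ ∫ s in a..t, h s := by
  simp only [L2norm_eq_sqrt] at hle ⊢
  refine sqrt_le_integral_of_hasDerivAt_le (G' := fun t => ∫ x, 2 * inner ℝ (u (t, x)) (u' (t, x)))
    (continuousOn_integral_of_forall_eq_zero (f := fun p => ‖u p‖ ^ 2) (by fun_prop) hK
      fun t ht x hx => by simp [hsupp t ht x hx])
    (fun t _ => integral_nonneg fun _ => by positivity) (by simp [hua]) (fun t ht => ?_) hh hh0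
    (fun t ht => ?_)
  · have hnhds : Ioo a b ∈ 𝓝 t := isOpen_Ioo.mem_nhds ht
    exact hasDerivAt_integral_of_forall_eq_zero (f := fun p => ‖u p‖ ^ 2)
      (f' := fun p => 2 * inner ℝ (u p) (u' p)) hK (fun s => by fun_prop) (by fun_prop)
      (fun x hx => by simp [hsupp t (Ioo_subset_Icc_self ht) x hx])
      (Filter.mem_of_superset hnhds fun s hs x hx => by
        simp [hsupp s (Ioo_subset_Icc_self hs) x hx])
      (Filter.mem_of_superset hnhds fun s hs x => (hderiv s hs x).norm_sq)
  · have hint : Integrable fun x => u' (t, x) * conj (u (t, x)) :=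
      integrable_mul_conj (by fun_prop) (by fun_prop)
        (HasCompactSupport.intro hK (hsupp t (Ioo_subset_Icc_self ht)))
    have hre : ∫ x, (u' (t, x) * conj (u (t, x))).re = (∫ x, u' (t, x) * conj (u (t, x))).re :=
      integral_re hint
    simp only [Complex.inner, integral_const_mul, hre]
    linarith [hle t ht]

lemma L2norm_le_integral_L2norm_timeDeriv {a b : ℝ} (hab : a < b) {K : Set Ω} (hK : IsCompact K)
    {u : ℝ × Ω → ℂ} (hu : ContDiff ℝ 1 u) (hsupp : ∀ t ∈ Icc a b, ∀ x ∉ K, u (t, x) = 0)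
    (hua : ∀ x, u (a, x) = 0) :
    ∀ t ∈ Icc a b,
      L2norm (fun x => u (t, x)) ≤ ∫ s in a..t, L2norm fun x => timeDeriv u (s, x) := by
  have hu' : Continuous (timeDeriv u) := (hu.timeDeriv (m := 0)).continuous
  have hsupp' := timeDeriv_eq_zero_of_forall_eq_zero (hu.differentiable one_ne_zero) hab hsupp
  refine L2norm_le_integral_of_re_integral_le hK hu.continuous hu' hsupp hua
    (fun t _ x => hasDerivAt_timeDeriv (hu.differentiable one_ne_zero _))
    (continuousOn_L2norm hK hu' hsupp') (fun _ _ => L2norm_nonneg _) fun t ht => ?_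
  have ht' := Ioo_subset_Icc_self ht
  exact (Complex.re_le_norm _).trans (norm_integral_mul_conj_le (by fun_prop) (by fun_prop)
    (HasCompactSupport.intro hK (hsupp' t ht')) (HasCompactSupport.intro hK (hsupp t ht')))

lemma integral_mul_conj_of_schrodinger {u u' A f : Ω → ℂ} {q : Ω → ℝ} (hq : Continuous q)
    (hu : Continuous u) (hu' : Continuous u') (hf : Continuous f) (hus : HasCompactSupport u)
    (hpde : ∀ x, I * u' x + A x + q x * u x = f x) :
    ∫ x, A x * conj (u x) = (∫ x, f x * conj (u x))
      - ↑(∫ x, q x * ‖u x‖ ^ 2) - I * ∫ x, u' x * conj (u x) := by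
  have hfu := integrable_mul_conj hf hu hus
  have hqu : Integrable fun x => (q x : ℂ) * u x * conj (u x) :=
    integrable_mul_conj (by fun_prop) hu hus
  have hu'u := (integrable_mul_conj hu' hu hus).const_mul I
  rw [← integral_ofReal_mul_mul_conj_self, ← integral_const_mul, ← integral_sub hfu hqu,
    ← integral_sub _ hu'u]
  · congr 1 with x
    rw [← hpde x]
    ring
  · exact hfu.sub hqu

lemma re_integral_mul_conj_le_of_schrodinger {u u' A f : Ω → ℂ} {q : Ω → ℝ} (hq : Continuous q)
    (hu : Continuous u) (hu' : Continuous u') (hf : Continuous f)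
    (hus : HasCompactSupport u) (hfs : HasCompactSupport f)
    (hpde : ∀ x, I * u' x + A x + q x * u x = f x) (hA : (∫ x, A x * conj (u x)).im = 0) :
    (∫ x, u' x * conj (u x)).re ≤ L2norm f * L2norm u := by
  rw [integral_mul_conj_of_schrodinger hq hu hu' hf hus hpde] at hA
  simp only [Complex.sub_im, Complex.ofReal_im, Complex.mul_im, Complex.I_re, Complex.I_im] at hA
  calc (∫ x, u' x * conj (u x)).re = (∫ x, f x * conj (u x)).im := by linarith
    _ ≤ ‖∫ x, f x * conj (u x)‖ := Complex.im_le_norm _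
    _ ≤ L2norm f * L2norm u := norm_integral_mul_conj_le hf hu hfs hus

lemma L2norm_le_integral_of_schrodinger {a b : ℝ} {K : Set Ω} (hK : IsCompact K) {q : Ω → ℝ}
    (hq : Continuous q) {u A f : ℝ × Ω → ℂ} (hu : ContDiff ℝ 1 u) (hf : Continuous f)
    (hsupp : ∀ t ∈ Icc a b, ∀ x ∉ K, u (t, x) = 0 ∧ f (t, x) = 0) (hua : ∀ x, u (a, x) = 0)
    (hpde : ∀ t ∈ Ioo a b, ∀ x, I * timeDeriv u (t, x) + A (t, x) + q x * u (t, x) = f (t, x))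
    (hA : ∀ t ∈ Ioo a b, (∫ x, A (t, x) * conj (u (t, x))).im = 0) :
    ∀ t ∈ Icc a b, L2norm (fun x => u (t, x)) ≤ ∫ s in a..t, L2norm fun x => f (s, x) := by
  have hu' : Continuous (timeDeriv u) := (hu.timeDeriv (m := 0)).continuous
  refine L2norm_le_integral_of_re_integral_le hK hu.continuous hu'
    (fun t ht x hx => (hsupp t ht x hx).1) hua
    (fun t _ x => hasDerivAt_timeDeriv (hu.differentiable one_ne_zero _))
    (continuousOn_L2norm hK hf fun t ht x hx => (hsupp t ht x hx).2)
    (fun _ _ => L2norm_nonneg _) fun t ht => ?_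
  have ht' := Ioo_subset_Icc_self ht
  exact re_integral_mul_conj_le_of_schrodinger hq (by fun_prop) (by fun_prop) (by fun_prop)
    (HasCompactSupport.intro hK fun x hx => (hsupp t ht' x hx).1)
    (HasCompactSupport.intro hK fun x hx => (hsupp t ht' x hx).2) (hpde t ht) (hA t ht)

lemma integral_mul_conj_timeDeriv {v D : ℝ × Ω → ℂ} (hv : ContDiff ℝ 2 v) (hD : Continuous D)
    {s : ℝ} (hws : HasCompactSupport fun x => timeDeriv v (s, x))
    (hlap : ∀ᶠ τ in 𝓝 s, ∀ x, HasDerivAt (fun τ => lapC (fun y => v (τ, y)) x) (D (τ, x)) τ) :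
    ∫ x, D (s, x) * conj (timeDeriv v (s, x))
      = -(↑((gradL2norm fun x => timeDeriv v (s, x)) ^ 2) : ℂ) := by
  set g : Ω → ℂ := fun x => timeDeriv v (s, x)
  have hg : ContDiff ℝ 1 g := (hv.timeDeriv (m := 1)).comp (contDiff_prodMk_right s)
  have hvτ : ∀ τ, ContDiff ℝ 2 fun y => v (τ, y) := fun τ => hv.comp (contDiff_prodMk_right τ)
  have hconj : ∀ {φ : Ω → ℂ}, HasCompactSupport φ → ∀ x ∉ tsupport φ, ∀ z : ℂ, z * conj (φ x) = 0 :=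
    fun _ x hx z => by simp [image_eq_zero_of_notMem_tsupport hx]
  -- Differentiate `τ ↦ ⟨Δv(τ), g⟩ = -∑ⱼ ⟨∂ⱼv(τ), ∂ⱼg⟩` at `τ = s` in both forms.
  have hΦ : HasDerivAt (fun τ => ∫ x, lapC (fun y => v (τ, y)) x * conj (g x))
      (∫ x, D (s, x) * conj (g x)) s :=
    hasDerivAt_integral_of_forall_eq_zero
      (f := fun p => lapC (fun y => v (p.1, y)) p.2 * conj (g p.2))
      (f' := fun p => D p * conj (g p.2)) hws
      (fun τ => (continuous_lapC (hvτ τ)).mul (continuous_conj.comp hg.continuous))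
      (hD.mul (continuous_conj.comp (hg.continuous.comp continuous_snd)))
      (fun x hx => hconj hws x hx _) (.of_forall fun τ x hx => hconj hws x hx _)
      (hlap.mono fun τ hτ x => (hτ x).mul_const (conj (g x)))
  have hΨ : HasDerivAt (fun τ => -∑ j, ∫ x, pd j (fun y => v (τ, y)) x * conj (pd j g x))
      (-∑ j, ∫ x, pd j g x * conj (pd j g x)) s := by
    refine .neg (.fun_sum fun j _ => ?_)
    have hgj : Continuous (pd j g) := (hg.pd (m := 0) j).continuous
    exact hasDerivAt_integral_of_forall_eq_zero
      (f := fun p => pd j (fun y => v (p.1, y)) p.2 * conj (pd j g p.2))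
      (f' := fun p => pd j (fun y => timeDeriv v (p.1, y)) p.2 * conj (pd j g p.2)) (hws.pd j)
      (fun τ => ((hvτ τ).pd (m := 1) j).continuous.mul (continuous_conj.comp hgj))
      ((continuous_fderiv_slice_apply (hv.timeDeriv (m := 1)) _).mul
        (continuous_conj.comp (hgj.comp continuous_snd)))
      (fun x hx => hconj (hws.pd j) x hx _) (.of_forall fun τ x hx => hconj (hws.pd j) x hx _)
      (.of_forall fun τ x => (hasDerivAt_fderiv_slice_apply hv τ x _).mul_const (conj (pd j g x)))
  have hΦΨ : (fun τ => ∫ x, lapC (fun y => v (τ, y)) x * conj (g x))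
      = fun τ => -∑ j, ∫ x, pd j (fun y => v (τ, y)) x * conj (pd j g x) :=
    funext fun τ => integral_lapC_mul_conj (hvτ τ) hg hws
  rw [hΦΨ] at hΦ
  rw [hΦ.unique hΨ, sum_integral_pd_mul_conj_self hg hws]

lemma L2norm_timeDeriv_le_integral_of_schrodinger {a b : ℝ} (hab : a < b) {K : Set Ω}
    (hK : IsCompact K) {q : Ω → ℝ} (hq : Continuous q) {v F : ℝ × Ω → ℂ} (hv : ContDiff ℝ 2 v)
    (hF : ContDiff ℝ 1 F) (hsupp : ∀ t ∈ Icc a b, ∀ x ∉ K, v (t, x) = 0 ∧ F (t, x) = 0)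
    (hpde : ∀ t ∈ Icc a b, ∀ x,
      I * timeDeriv v (t, x) + lapC (fun y => v (t, y)) x + q x * v (t, x) = F (t, x))
    (hva : ∀ x, v (a, x) = 0) (hFa : ∀ x, F (a, x) = 0) :
    ∀ t ∈ Icc a b, L2norm (fun x => timeDeriv v (t, x))
      ≤ ∫ s in a..t, L2norm fun x => timeDeriv F (s, x) := by
  have hw : ContDiff ℝ 1 (timeDeriv v) := hv.timeDeriv (m := 1)
  have hwsupp := timeDeriv_eq_zero_of_forall_eq_zero (hv.differentiable two_ne_zero) hab
    fun t ht x hx => (hsupp t ht x hx).1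
  have hF'supp := timeDeriv_eq_zero_of_forall_eq_zero (hF.differentiable one_ne_zero) hab
    fun t ht x hx => (hsupp t ht x hx).2
  have hwa : ∀ x, timeDeriv v (a, x) = 0 := by
    intro x
    have hpd0 : ∀ j, pd j (0 : Ω → ℂ) = 0 := fun j => funext fun y => by simp [pd]
    have hlap : lapC (fun y => v (a, y)) x = 0 := by
      rw [show (fun y => v (a, y)) = 0 from funext hva]
      simp [lapC, hpd0]
    have h := hpde a ⟨le_rfl, hab.le⟩ x
    rw [hlap, hva, hFa] at h
    simpa using h
  -- `D = ∂ₜΔv`, which exists by the equation although `v` is only `C²`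
  set D : ℝ × Ω → ℂ :=
    fun p => timeDeriv F p - q p.2 * timeDeriv v p - I * timeDeriv (timeDeriv v) p
  have hD : Continuous D := by
    have := (hF.timeDeriv (m := 0)).continuous
    have := (hv.timeDeriv (m := 1)).continuous
    have := (hw.timeDeriv (m := 0)).continuous
    fun_prop
  refine L2norm_le_integral_of_schrodinger hK hq hw (hF.timeDeriv (m := 0)).continuous
    (fun t ht x hx => ⟨hwsupp t ht x hx, hF'supp t ht x hx⟩) hwa (A := D)
    (fun t _ x => by simp only [D]; ring) fun s hs => ?_
  have hlap : ∀ᶠ τ in 𝓝 s, ∀ x,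
      HasDerivAt (fun τ => lapC (fun y => v (τ, y)) x) (D (τ, x)) τ := by
    filter_upwards [isOpen_Ioo.mem_nhds hs] with τ hτ x
    have hd := ((hasDerivAt_timeDeriv (hF.differentiable one_ne_zero (τ, x))).fun_sub
      ((hasDerivAt_timeDeriv (hv.differentiable two_ne_zero (τ, x))).const_mul (q x : ℂ))).fun_sub
      ((hasDerivAt_timeDeriv (hw.differentiable one_ne_zero (τ, x))).const_mul I)
    refine hd.congr_of_eventuallyEq ?_
    filter_upwards [isOpen_Ioo.mem_nhds hτ] with σ hσ
    linear_combination hpde σ (Ioo_subset_Icc_self hσ) x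
  rw [integral_mul_conj_timeDeriv hv hD
    (HasCompactSupport.intro hK (hwsupp s (Ioo_subset_Icc_self hs))) hlap, Complex.neg_im,
    Complex.ofReal_im, neg_zero]

lemma gradL2norm_sq_le_of_schrodinger {f w g : Ω → ℂ} {q : Ω → ℝ} {M : ℝ} (hq : Continuous q)
    (hqM : ∀ x, |q x| ≤ M) (hf : ContDiff ℝ 2 f) (hw : Continuous w) (hg : Continuous g)
    (hfs : HasCompactSupport f) (hws : HasCompactSupport w) (hgs : HasCompactSupport g)
    (hpde : ∀ x, I * w x + lapC f x + q x * f x = g x) :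
    gradL2norm f ^ 2 ≤ (L2norm g + L2norm w) * L2norm f + M * L2norm f ^ 2 := by
  have h := congrArg Complex.re (integral_mul_conj_of_schrodinger hq hf.continuous hw hg hfs hpde)
  rw [integral_lapC_mul_conj_self hf hfs] at h
  simp only [Complex.neg_re, Complex.sub_re, Complex.ofReal_re, Complex.mul_re, Complex.I_re,
    Complex.I_im, zero_mul, one_mul, zero_sub] at h
  have hgf := (neg_le_abs _).trans ((Complex.abs_re_le_norm _).trans
    (norm_integral_mul_conj_le hg hf.continuous hgs hfs))
  have hwf := (neg_le_abs _).trans ((Complex.abs_im_le_norm _).trans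
    (norm_integral_mul_conj_le hw hf.continuous hws hfs))
  have hqf : ∫ x, q x * ‖f x‖ ^ 2 ≤ M * L2norm f ^ 2 := by
    have hf2 : HasCompactSupport fun x => ‖f x‖ ^ 2 :=
      hfs.comp_left (g := fun z => ‖z‖ ^ 2) (by simp)
    have hcont : Continuous fun x => ‖f x‖ ^ 2 := by fun_prop
    rw [L2norm_sq, ← integral_const_mul]
    exact integral_mono ((hq.mul hcont).integrable_of_hasCompactSupport hf2.mul_left)
      ((hcont.integrable_of_hasCompactSupport hf2).const_mul M)
      fun x => mul_le_mul_of_nonneg_right ((le_abs_self _).trans (hqM x)) (by positivity)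
  linarith

lemma L2norm_le_of_schrodinger {a b : ℝ} (hab : a < b) {K : Set Ω} (hK : IsCompact K)
    {q : Ω → ℝ} (hq : Continuous q) {v F : ℝ × Ω → ℂ} (hv : ContDiff ℝ 2 v) (hF : ContDiff ℝ 2 F)
    (hsupp : ∀ t ∈ Icc a b, ∀ x ∉ K, v (t, x) = 0 ∧ F (t, x) = 0)
    (hpde : ∀ t ∈ Icc a b, ∀ x,
      I * timeDeriv v (t, x) + lapC (fun y => v (t, y)) x + q x * v (t, x) = F (t, x))
    (hva : ∀ x, v (a, x) = 0) (hFa : ∀ x, F (a, x) = 0) {t : ℝ} (ht : t ∈ Icc a b) :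
    L2norm (fun x => F (t, x)) ≤ ∫ s in a..b, L2norm (fun x => timeDeriv F (s, x)) ∧
    L2norm (fun x => v (t, x)) ≤ ∫ s in a..b, L2norm (fun x => F (s, x)) ∧
    L2norm (fun x => timeDeriv v (t, x)) ≤ ∫ s in a..b, L2norm (fun x => timeDeriv F (s, x)) := by
  have hF1 : ContDiff ℝ 1 F := hF.of_le one_le_two
  have hvsupp : ∀ s ∈ Icc a b, ∀ x ∉ K, v (s, x) = 0 := fun s hs x hx => (hsupp s hs x hx).1
  have hFsupp : ∀ s ∈ Icc a b, ∀ x ∉ K, F (s, x) = 0 := fun s hs x hx => (hsupp s hs x hx).2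
  have hF'supp := timeDeriv_eq_zero_of_forall_eq_zero (hF1.differentiable one_ne_zero) hab hFsupp
  have hA := integral_le_integral_of_mem_Icc ht
    (continuousOn_L2norm hK (hF.timeDeriv (m := 1)).continuous hF'supp) fun _ _ => L2norm_nonneg _
  have hB := integral_le_integral_of_mem_Icc ht (continuousOn_L2norm hK hF.continuous hFsupp)
    fun _ _ => L2norm_nonneg _
  have hlap : ∀ s ∈ Ioo a b, (∫ x, lapC (fun y => v (s, y)) x * conj (v (s, x))).im = 0 := by
    intro s hs
    rw [integral_lapC_mul_conj_self (f := fun y => v (s, y)) (hv.comp (contDiff_prodMk_right s))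
      (HasCompactSupport.intro hK (hvsupp s (Ioo_subset_Icc_self hs))), Complex.neg_im,
      Complex.ofReal_im, neg_zero]
  exact ⟨(L2norm_le_integral_L2norm_timeDeriv hab hK hF1 hFsupp hFa t ht).trans hA,
    (L2norm_le_integral_of_schrodinger hK hq (hv.of_le one_le_two) hF.continuous hsupp hva
      (A := fun p => lapC (fun y => v (p.1, y)) p.2) (fun s hs => hpde s (Ioo_subset_Icc_self hs))
      hlap t ht).trans hB,
    (L2norm_timeDeriv_le_integral_of_schrodinger hab hK hq hv hF1 hsupp hpde hva hFa t ht).trans hA⟩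

lemma gradL2norm_sq_le_mul_integral_of_schrodinger {a b : ℝ} (hab : a < b) {K : Set Ω}
    (hK : IsCompact K) {q : Ω → ℝ} (hq : Continuous q) {M : ℝ} (hqM : ∀ x, |q x| ≤ M)
    (hM : 0 ≤ M) {v F : ℝ × Ω → ℂ} (hv : ContDiff ℝ 2 v) (hF : ContDiff ℝ 2 F)
    (hsupp : ∀ t ∈ Icc a b, ∀ x ∉ K, v (t, x) = 0 ∧ F (t, x) = 0)
    (hpde : ∀ t ∈ Icc a b, ∀ x,
      I * timeDeriv v (t, x) + lapC (fun y => v (t, y)) x + q x * v (t, x) = F (t, x))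
    (hva : ∀ x, v (a, x) = 0) (hFa : ∀ x, F (a, x) = 0) {t : ℝ} (ht : t ∈ Icc a b) :
    gradL2norm (fun x => v (t, x)) ^ 2 ≤ (2 + M * (b - a)) *
      ((∫ s in a..b, L2norm (fun x => timeDeriv F (s, x))) *
        ∫ s in a..b, L2norm (fun x => F (s, x))) := by
  have hbounds := fun {s} (hs : s ∈ Icc a b) =>
    L2norm_le_of_schrodinger hab hK hq hv hF hsupp hpde hva hFa hs
  obtain ⟨hFA, hvB, hwA⟩ := hbounds ht
  set A := ∫ s in a..b, L2norm (fun x => timeDeriv F (s, x))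
  set B := ∫ s in a..b, L2norm (fun x => F (s, x))
  have hBA : B ≤ (b - a) * A := by
    simpa using intervalIntegral.integral_mono_on hab.le
      ((continuousOn_L2norm hK hF.continuous fun s hs x hx =>
        (hsupp s hs x hx).2).intervalIntegrable_of_Icc (μ := volume) hab.le)
      intervalIntegrable_const fun s hs => (hbounds hs).1
  have hwsupp := timeDeriv_eq_zero_of_forall_eq_zero (hv.differentiable two_ne_zero) hab
    fun s hs x hx => (hsupp s hs x hx).1
  have hgrad := gradL2norm_sq_le_of_schrodinger (f := fun x => v (t, x))
    (w := fun x => timeDeriv v (t, x)) (g := fun x => F (t, x)) hq hqM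
    (hv.comp (contDiff_prodMk_right t))
    ((hv.timeDeriv (m := 1)).continuous.comp (by fun_prop)) (hF.continuous.comp (by fun_prop))
    (HasCompactSupport.intro hK fun x hx => (hsupp t ht x hx).1)
    (HasCompactSupport.intro hK (hwsupp t ht))
    (HasCompactSupport.intro hK fun x hx => (hsupp t ht x hx).2)
    (hpde t ht)
  have hv0 := L2norm_nonneg fun x => v (t, x)
  have h1 : (L2norm (fun x => F (t, x)) + L2norm fun x => timeDeriv v (t, x))
      * L2norm (fun x => v (t, x)) ≤ (A + A) * B :=
    mul_le_mul (add_le_add hFA hwA) hvB hv0 (by linarith [L2norm_nonneg fun x => F (t, x)])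
  have h2 : L2norm (fun x => v (t, x)) ^ 2 ≤ B * ((b - a) * A) := by
    rw [sq]
    exact mul_le_mul hvB (hvB.trans hBA) hv0 (hv0.trans hvB)
  nlinarith [mul_le_mul_of_nonneg_left h2 hM]

end Euclidean

theorem stmt5_general {n : ℕ} (T : ℝ) (hT : 0 < T) (M : ℝ) :
    ∃ C : ℝ, ∀ (q : EuclideanSpace ℝ (Fin n) → ℝ), Continuous q →
      (∀ x, |q x| ≤ M) →
      ∀ (v F : ℝ × EuclideanSpace ℝ (Fin n) → ℂ),
        ContDiff ℝ 2 v → ContDiff ℝ 2 F →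
        ∀ (K : Set (EuclideanSpace ℝ (Fin n))), IsCompact K →
        (∀ t ∈ Set.Icc (0:ℝ) T, ∀ x ∉ K, v (t, x) = 0 ∧ F (t, x) = 0) →
        (∀ t ∈ Set.Icc (0:ℝ) T, ∀ x,
          Complex.I * deriv (fun s => v (s, x)) t + lapC (fun y => v (t, y)) x
            + (q x : ℂ) * v (t, x) = F (t, x)) →
        (∀ x, v (0, x) = 0) → (∀ x, F (0, x) = 0) →
        ∀ t ∈ Set.Icc (0:ℝ) T, ∀ η : ℝ, 0 < η →
          gradL2norm (fun x => v (t, x))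
            ≤ C * (η * (∫ s in (0:ℝ)..T,
                      L2norm (fun x => deriv (fun τ => F (τ, x)) s))
                 + η⁻¹ * ∫ s in (0:ℝ)..T, L2norm (fun x => F (s, x))) := by
  refine ⟨√(2 + max M 0 * T) / 2, ?_⟩
  intro q hq hqM v F hv hF K hK hsupp hpde hv0 hF0 t ht η hη
  simp only [deriv_eq_timeDeriv (hv.differentiable two_ne_zero)] at hpde
  simp only [deriv_eq_timeDeriv (hF.differentiable two_ne_zero)]
  have hgrad := gradL2norm_sq_le_mul_integral_of_schrodinger hT hK hq
    (fun x => (hqM x).trans (le_max_left M 0)) (le_max_right M 0) hv hF hsupp hpde hv0 hF0 ht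
  rw [sub_zero] at hgrad
  set A := ∫ s in (0:ℝ)..T, L2norm (fun x => timeDeriv F (s, x))
  set B := ∫ s in (0:ℝ)..T, L2norm (fun x => F (s, x))
  have hA : 0 ≤ A := intervalIntegral.integral_nonneg hT.le fun _ _ => L2norm_nonneg _
  have hB : 0 ≤ B := intervalIntegral.integral_nonneg hT.le fun _ _ => L2norm_nonneg _
  calc gradL2norm (fun x => v (t, x))
      = √(gradL2norm (fun x => v (t, x)) ^ 2) := (Real.sqrt_sq (gradL2norm_nonneg _)).symm
    _ ≤ √((2 + max M 0 * T) * (A * B)) := Real.sqrt_le_sqrt hgrad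
    _ = √(2 + max M 0 * T) * √(A * B) := Real.sqrt_mul (by positivity) _
    _ ≤ √(2 + max M 0 * T) * ((η * A + η⁻¹ * B) / 2) :=
      mul_le_mul_of_nonneg_left (sqrt_mul_le_add_div_two hA hB hη) (Real.sqrt_nonneg _)
    _ = √(2 + max M 0 * T) / 2 * (η * A + η⁻¹ * B) := by ring

/-- If `i ∂ₜv + Δv + q v = F` on `[0,T] × ℝⁿ`, with `|q| ≤ M`, `v, F` compactly
supported in `x`, `v(0,·) = 0` and `F(0,·) = 0`, then there is a constant `C`
depending only on `T` and `M` such that for every `t ∈ [0,T]` and `η > 0`,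
`‖∇v(t,·)‖_{L²} ≤ C (η ∫₀ᵀ ‖∂ₜF(s,·)‖_{L²} ds + η⁻¹ ∫₀ᵀ ‖F(s,·)‖_{L²} ds)`. -/
theorem stmt5 {n : ℕ} (hn : 1 ≤ n) (T : ℝ) (hT : 0 < T) (M : ℝ) :
    ∃ C : ℝ, ∀ (q : EuclideanSpace ℝ (Fin n) → ℝ), Continuous q →
      (∀ x, |q x| ≤ M) →
      ∀ (v F : ℝ × EuclideanSpace ℝ (Fin n) → ℂ),
        ContDiff ℝ 2 v → ContDiff ℝ 2 F →
        ∀ (K : Set (EuclideanSpace ℝ (Fin n))), IsCompact K →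
        (∀ t ∈ Set.Icc (0:ℝ) T, ∀ x ∉ K, v (t, x) = 0 ∧ F (t, x) = 0) →
        (∀ t ∈ Set.Icc (0:ℝ) T, ∀ x,
          Complex.I * deriv (fun s => v (s, x)) t + lapC (fun y => v (t, y)) x
            + (q x : ℂ) * v (t, x) = F (t, x)) →
        (∀ x, v (0, x) = 0) → (∀ x, F (0, x) = 0) →
        ∀ t ∈ Set.Icc (0:ℝ) T, ∀ η : ℝ, 0 < η →
          gradL2norm (fun x => v (t, x))
            ≤ C * (η * (∫ s in (0:ℝ)..T,
                      L2norm (fun x => deriv (fun τ => F (τ, x)) s))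
                 + η⁻¹ * ∫ s in (0:ℝ)..T, L2norm (fun x => F (s, x))) :=
  stmt5_general T hT M
end
end

section
/- Let n ≥ 1. Let ψ : ℝⁿ → ℝ be twice continuously differentiable with |∇ψ(x)|² = 1 for all x (eikonal equation), let a : ℝ × ℝⁿ → ℂ be twice continuously differentiable and satisfy the transport equation ∂ₜa(t,x) + ⟨∇ψ(x), ∇ₓa(t,x)⟩ + (1/2) a(t,x) Δψ(x) = 0 for all (t,x), let q : ℝⁿ → ℂ, and let λ > 0. Define u(t,x) = a(2λt, x) · exp(iλ(ψ(x) − λt)). Then for all (t,x), i ∂ₜu(t,x) + Δu(t,x) + q(x) u(t,x) = exp(iλ(ψ(x) − λt)) · [ (Δₓa)(2λt,x) + q(x) a(2λt,x) ]. -/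
open MeasureTheory Complex

/-!
Write `u(t, ·) = F E` with `F = a(2λt, ·)` and `E = e^{iλ(ψ − λt)}`. The Leibniz rule gives
`Δu = (ΔF + 2iλ⟨∇ψ, ∇F⟩ + iλ Δψ F − λ² |∇ψ|² F) E` and the chain rule gives
`i ∂ₜu = (2iλ ∂ₜa + λ² a) E`. The eikonal equation cancels the two `λ²` terms, and the remaining
terms of order `λ` are `2iλ` times the transport expression, which vanishes.
-/

noncomputable section

/-- Partial derivative in the `j`-th coordinate direction of a real-valued
function on `ℝⁿ`. -/
def pdR {n : ℕ} (j : Fin n) (f : EuclideanSpace ℝ (Fin n) → ℝ)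
    (x : EuclideanSpace ℝ (Fin n)) : ℝ :=
  fderiv ℝ f x (EuclideanSpace.single j 1)

/-- Euclidean Laplacian `Σⱼ ∂²/∂xⱼ²` of a real-valued function on `ℝⁿ`. -/
def lapR {n : ℕ} (f : EuclideanSpace ℝ (Fin n) → ℝ)
    (x : EuclideanSpace ℝ (Fin n)) : ℝ :=
  ∑ j, pdR j (pdR j f) x

variable {n : ℕ}

section PartialDerivatives

variable {f g : EuclideanSpace ℝ (Fin n) → ℂ} {x : EuclideanSpace ℝ (Fin n)} (j : Fin n)

lemma contDiff_pd (hf : ContDiff ℝ 2 f) : ContDiff ℝ 1 (pd j f) :=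
  (hf.fderiv_right le_rfl).clm_apply contDiff_const

lemma contDiff_pdR {ψ : EuclideanSpace ℝ (Fin n) → ℝ} (hψ : ContDiff ℝ 2 ψ) :
    ContDiff ℝ 1 (pdR j ψ) :=
  (hψ.fderiv_right le_rfl).clm_apply contDiff_const

lemma pd_add (hf : DifferentiableAt ℝ f x) (hg : DifferentiableAt ℝ g x) :
    pd j (fun y => f y + g y) x = pd j f x + pd j g x := by
  simp [pd, fderiv_fun_add hf hg]

lemma pd_mul (hf : DifferentiableAt ℝ f x) (hg : DifferentiableAt ℝ g x) :
    pd j (fun y => f y * g y) x = pd j f x * g x + f x * pd j g x := by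
  simp [pd, fderiv_fun_mul hf hg]
  ring

lemma pd_const_mul (c : ℂ) (hf : DifferentiableAt ℝ f x) :
    pd j (fun y => c * f y) x = c * pd j f x := by
  simp [pd, fderiv_const_mul hf c]

lemma pd_ofReal {ψ : EuclideanSpace ℝ (Fin n) → ℝ} (hψ : DifferentiableAt ℝ ψ x) :
    pd j (fun y => (ψ y : ℂ)) x = pdR j ψ x := by
  have h : HasFDerivAt (fun y => (ψ y : ℂ)) (ofRealCLM.comp (fderiv ℝ ψ x)) x :=
    ofRealCLM.hasFDerivAt.comp x hψ.hasFDerivAt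
  simp [pd, pdR, h.fderiv]

lemma pd_pd_mul (hf : ContDiff ℝ 2 f) (hg : ContDiff ℝ 2 g) :
    pd j (pd j (fun y => f y * g y)) x
      = pd j (pd j f) x * g x + 2 * (pd j f x * pd j g x) + f x * pd j (pd j g) x := by
  have hf1 : Differentiable ℝ f := hf.differentiable two_ne_zero
  have hg1 : Differentiable ℝ g := hg.differentiable two_ne_zero
  have hf2 : Differentiable ℝ (pd j f) := (contDiff_pd j hf).differentiable one_ne_zero
  have hg2 : Differentiable ℝ (pd j g) := (contDiff_pd j hg).differentiable one_ne_zero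
  have hfirst : pd j (fun y => f y * g y) = fun y => pd j f y * g y + f y * pd j g y :=
    funext fun y => pd_mul j (hf1 y) (hg1 y)
  rw [hfirst, pd_add (f := fun y => pd j f y * g y) (g := fun y => f y * pd j g y) j
      ((hf2 x).mul (hg1 x)) ((hf1 x).mul (hg2 x)),
    pd_mul j (hf2 x) (hg1 x), pd_mul j (hf1 x) (hg2 x)]
  ring

lemma lapC_mul (hf : ContDiff ℝ 2 f) (hg : ContDiff ℝ 2 g) :
    lapC (fun y => f y * g y) x
      = lapC f x * g x + 2 * ∑ j, pd j f x * pd j g x + f x * lapC g x := by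
  simp only [lapC, pd_pd_mul _ hf hg, Finset.sum_add_distrib, Finset.mul_sum, Finset.sum_mul]

end PartialDerivatives

section Phase

variable {ψ : EuclideanSpace ℝ (Fin n) → ℝ} (c d : ℂ)

lemma pd_cexp_phase (hψ : Differentiable ℝ ψ) (j : Fin n) :
    pd j (fun y => cexp (c * ψ y + d))
      = fun y => c * pdR j ψ y * cexp (c * ψ y + d) := by
  funext y
  have h : HasFDerivAt (fun y => cexp (c * ψ y + d))
      (cexp (c * ψ y + d) • c • ofRealCLM.comp (fderiv ℝ ψ y)) y :=
    (((ofRealCLM.hasFDerivAt.comp y (hψ y).hasFDerivAt).const_mul c).add_const d).cexp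
  simp [pd, pdR, h.fderiv]
  ring

lemma contDiff_cexp_phase (hψ : ContDiff ℝ 2 ψ) :
    ContDiff ℝ 2 (fun y => cexp (c * ψ y + d)) :=
  ((contDiff_const.mul (ofRealCLM.contDiff.comp hψ)).add contDiff_const).cexp

lemma lapC_cexp_phase (hψ : ContDiff ℝ 2 ψ) (x : EuclideanSpace ℝ (Fin n)) :
    lapC (fun y => cexp (c * ψ y + d)) x
      = (c * lapR ψ x + c ^ 2 * ∑ j, (pdR j ψ x : ℂ) ^ 2) * cexp (c * ψ x + d) := by
  have hψ1 : Differentiable ℝ ψ := hψ.differentiable two_ne_zero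
  have hpdR (j : Fin n) : Differentiable ℝ (fun y => (pdR j ψ y : ℂ)) :=
    ofRealCLM.differentiable.comp ((contDiff_pdR j hψ).differentiable one_ne_zero)
  have hexp : Differentiable ℝ (fun y => cexp (c * ψ y + d)) :=
    (contDiff_cexp_phase c d hψ).differentiable two_ne_zero
  have hsecond (j : Fin n) : pd j (pd j (fun y => cexp (c * ψ y + d))) x
      = (c * pdR j (pdR j ψ) x + c ^ 2 * (pdR j ψ x : ℂ) ^ 2) * cexp (c * ψ x + d) := by
    rw [pd_cexp_phase c d hψ1, pd_mul j (((hpdR j).const_mul c) x) (hexp x),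
      pd_cexp_phase c d hψ1, pd_const_mul j c (hpdR j x),
      pd_ofReal j ((contDiff_pdR j hψ).differentiable one_ne_zero x)]
    ring
  simp only [lapC, hsecond, lapR, ← Finset.sum_mul, Finset.sum_add_distrib]
  push_cast
  simp only [Finset.mul_sum]

lemma lapC_mul_cexp_phase {F : EuclideanSpace ℝ (Fin n) → ℂ} (hF : ContDiff ℝ 2 F)
    (hψ : ContDiff ℝ 2 ψ) (x : EuclideanSpace ℝ (Fin n)) :
    lapC (fun y => F y * cexp (c * ψ y + d)) x
      = (lapC F x + 2 * c * ∑ j, (pdR j ψ x : ℂ) * pd j F x + c * lapR ψ x * F x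
          + c ^ 2 * (∑ j, (pdR j ψ x : ℂ) ^ 2) * F x) * cexp (c * ψ x + d) := by
  have hcross : ∑ j, pd j F x * pd j (fun y => cexp (c * ψ y + d)) x
      = c * cexp (c * ψ x + d) * ∑ j, (pdR j ψ x : ℂ) * pd j F x := by
    simp only [pd_cexp_phase c d (hψ.differentiable two_ne_zero), Finset.mul_sum]
    exact Finset.sum_congr rfl fun j _ => by ring
  rw [lapC_mul hF (contDiff_cexp_phase c d hψ), lapC_cexp_phase c d hψ, hcross]
  ring

end Phase

lemma hasDerivAt_comp_mul_mul_cexp {g : ℝ → ℂ} {k t : ℝ} (hg : DifferentiableAt ℝ g (k * t))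
    (b c : ℂ) :
    HasDerivAt (fun s : ℝ => g (k * s) * cexp (b + c * s))
      ((k * deriv g (k * t) + c * g (k * t)) * cexp (b + c * t)) t := by
  have hinner : HasDerivAt (fun s : ℝ => k * s) k t := by
    simpa using (hasDerivAt_id t).const_mul k
  have hphase : HasDerivAt (fun s : ℝ => b + c * s) c t := by
    simpa using ((hasDerivAt_id t).ofReal_comp.const_mul c).const_add b
  refine ((hg.hasDerivAt.scomp t hinner).fun_mul hphase.cexp).congr_deriv ?_
  rw [Complex.real_smul, Function.comp_apply]
  ring

theorem stmt7_general {n : ℕ}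
    (ψ : EuclideanSpace ℝ (Fin n) → ℝ) (hψ : ContDiff ℝ 2 ψ)
    (heik : ∀ x, ∑ j, (pdR j ψ x) ^ 2 = 1)
    (a : ℝ × EuclideanSpace ℝ (Fin n) → ℂ) (ha : ContDiff ℝ 2 a)
    (htransport : ∀ (t : ℝ) (x : EuclideanSpace ℝ (Fin n)),
      deriv (fun s => a (s, x)) t
        + (∑ j, ((pdR j ψ x : ℝ) : ℂ) * pd j (fun y => a (t, y)) x)
        + (1/2 : ℂ) * a (t, x) * ((lapR ψ x : ℝ) : ℂ) = 0)
    (q : EuclideanSpace ℝ (Fin n) → ℂ) (lam : ℝ)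
    (u : ℝ × EuclideanSpace ℝ (Fin n) → ℂ)
    (hu : ∀ p : ℝ × EuclideanSpace ℝ (Fin n),
      u p = a (2 * lam * p.1, p.2)
        * Complex.exp (Complex.I * (lam : ℂ) * ((ψ p.2 : ℂ) - (lam : ℂ) * (p.1 : ℂ)))) :
    ∀ (t : ℝ) (x : EuclideanSpace ℝ (Fin n)),
      Complex.I * deriv (fun s => u (s, x)) t + lapC (fun y => u (t, y)) x
          + q x * u (t, x)
        = Complex.exp (Complex.I * (lam : ℂ) * ((ψ x : ℂ) - (lam : ℂ) * (t : ℂ)))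
          * (lapC (fun y => a (2 * lam * t, y)) x + q x * a (2 * lam * t, x)) := by
  intro t x
  have hu' (s : ℝ) (y : EuclideanSpace ℝ (Fin n)) : u (s, y)
      = a (2 * lam * s, y) * cexp (I * lam * ψ y + -(I * lam ^ 2) * s) := by
    rw [hu]
    congr 2
    ring
  have hspace := lapC_mul_cexp_phase (I * lam) (-(I * lam ^ 2) * t)
    (F := fun y => a (2 * lam * t, y)) (ha.comp (contDiff_const.prodMk contDiff_id)) hψ x
  have htime := hasDerivAt_comp_mul_mul_cexp (g := fun s => a (s, x)) (k := 2 * lam) (t := t)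
    ((ha.comp (contDiff_id.prodMk contDiff_const)).differentiable two_ne_zero _)
    (I * lam * ψ x) (-(I * lam ^ 2))
  have heikC : ∑ j, (pdR j ψ x : ℂ) ^ 2 = 1 := by exact_mod_cast heik x
  have hphase : I * lam * (ψ x - lam * t) = I * lam * ψ x + -(I * lam ^ 2) * t := by ring
  simp only [hu'] at hspace ⊢
  rw [hphase, htime.deriv, hspace, heikC]
  push_cast
  linear_combination (2 * I * lam * cexp (I * lam * ψ x + -(I * lam ^ 2) * t))
    * htransport (2 * lam * t) x

/-- If `ψ` solves the eikonal equation `|∇ψ|² = 1` and `a` solves the transport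
equation `∂ₜa + ⟨∇ψ, ∇ₓa⟩ + (1/2) a Δψ = 0`, then the WKB ansatz
`u(t,x) = a(2λt,x) e^{iλ(ψ(x)−λt)}` satisfies
`i ∂ₜu + Δu + q u = e^{iλ(ψ−λt)} [Δₓa + q a]` evaluated at `(2λt, x)`. -/
theorem stmt7 {n : ℕ} (hn : 1 ≤ n)
    (ψ : EuclideanSpace ℝ (Fin n) → ℝ) (hψ : ContDiff ℝ 2 ψ)
    (heik : ∀ x, ∑ j, (pdR j ψ x) ^ 2 = 1)
    (a : ℝ × EuclideanSpace ℝ (Fin n) → ℂ) (ha : ContDiff ℝ 2 a)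
    (htransport : ∀ (t : ℝ) (x : EuclideanSpace ℝ (Fin n)),
      deriv (fun s => a (s, x)) t
        + (∑ j, ((pdR j ψ x : ℝ) : ℂ) * pd j (fun y => a (t, y)) x)
        + (1/2 : ℂ) * a (t, x) * ((lapR ψ x : ℝ) : ℂ) = 0)
    (q : EuclideanSpace ℝ (Fin n) → ℂ) (lam : ℝ) (hlam : 0 < lam)
    (u : ℝ × EuclideanSpace ℝ (Fin n) → ℂ)
    (hu : ∀ p : ℝ × EuclideanSpace ℝ (Fin n),
      u p = a (2 * lam * p.1, p.2)
        * Complex.exp (Complex.I * (lam : ℂ) * ((ψ p.2 : ℂ) - (lam : ℂ) * (p.1 : ℂ)))) :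
    ∀ (t : ℝ) (x : EuclideanSpace ℝ (Fin n)),
      Complex.I * deriv (fun s => u (s, x)) t + lapC (fun y => u (t, y)) x
          + q x * u (t, x)
        = Complex.exp (Complex.I * (lam : ℂ) * ((ψ x : ℂ) - (lam : ℂ) * (t : ℂ)))
          * (lapC (fun y => a (2 * lam * t, y)) x + q x * a (2 * lam * t, x)) :=
  stmt7_general ψ hψ heik a ha htransport q lam u hu
end
end
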